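/- Let R be a commutative ring with unity such that every finitely generated torsion-free R-module is projective. Let ν be a nilpotent R-linear endomorphism of R^n with ν^m = 0. Then there is an R-linear isomorphism R^n ≅ ⊕_{i=0}^{m−1} ker(ν^{i+1})/ker(ν^i), where ker(ν^0) = 0; i.e., R^n is isomorphic to the direct sum of the successive quotients of the kernel filtration 0 ⊆ ker(ν) ⊆ ker(ν^2) ⊆ ⋯ ⊆ ker(ν^m) = R^n. -/

import Mathlib

open DirectSum

section Aux

universe u
variable {R : Type u} [CommRing R]

/-- Snoc linear equivalence for dependent products over `Fin`. -/
def aux_snoc {R : Type u} [CommRing R] (k : ℕ) (Q : ℕ → Type u)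
    [∀ j, AddCommGroup (Q j)] [∀ j, Module R (Q j)] :
    ((Π i : Fin k, Q i) × Q k) ≃ₗ[R] Π i : Fin (k + 1), Q i where
  toFun x := Fin.snoc (α := fun i : Fin (k + 1) => Q i) x.1 x.2
  invFun g := (fun i => g i.castSucc, g (Fin.last k))
  map_add' x y := by
    funext i
    refine Fin.lastCases ?_ ?_ i
    · simp [Fin.snoc_last]
    · intro i; simp [Fin.snoc_castSucc]
  map_smul' c x := by
    funext i
    refine Fin.lastCases ?_ ?_ i
    · simp [Fin.snoc_last]
    · intro i; simp [Fin.snoc_castSucc]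
  left_inv x := by simp [Fin.snoc_castSucc, Fin.snoc_last]
  right_inv g := by
    funext i
    refine Fin.lastCases ?_ ?_ i
    · simp [Fin.snoc_last]
    · intro i; simp [Fin.snoc_castSucc]

/-- Splitting lemma: a surjection onto a projective module splits the domain. -/
lemma aux_split {M N : Type u} [AddCommGroup M] [Module R M] [AddCommGroup N] [Module R N]
    [Module.Projective R N] (f : M →ₗ[R] N) (hf : Function.Surjective f) :
    Nonempty (M ≃ₗ[R] (LinearMap.ker f × N)) := by
  obtain ⟨s, hs⟩ := Module.projective_lifting_property f LinearMap.id hf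
  have hsec : ∀ y, f (s y) = y := fun y => congrArg (fun g => g y) hs
  have hsinj : Function.Injective s := fun a b h => by
    have := congrArg f h; rwa [hsec, hsec] at this
  have hcompl : IsCompl (LinearMap.ker f) (LinearMap.range s) := by
    constructor
    · rw [disjoint_iff]
      ext x
      simp only [Submodule.mem_inf, LinearMap.mem_ker, LinearMap.mem_range,
        Submodule.mem_bot]
      constructor
      · rintro ⟨hx0, y, rfl⟩
        have : y = 0 := by rw [← hsec y, hx0]
        simp [this]
      · rintro rfl; exact ⟨by simp, 0, by simp⟩
    · rw [codisjoint_iff, eq_top_iff]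
      intro x _
      have : x = (x - s (f x)) + s (f x) := by abel
      rw [this]
      exact Submodule.add_mem_sup (by simp [hsec]) ⟨f x, rfl⟩
  have e1 : ((LinearMap.ker f × N : Type u)) ≃ₗ[R] M :=
    (LinearEquiv.prodCongr (LinearEquiv.refl R (LinearMap.ker f))
      (LinearEquiv.ofInjective s hsinj)).trans (Submodule.prodEquivOfIsCompl _ _ hcompl)
  exact ⟨e1.symm⟩

end Aux

set_option maxHeartbeats 1000000 in
set_option synthInstance.maxHeartbeats 400000 in
/-- Let `R` be a commutative ring with unity such that every finitely generated
torsion-free `R`-module is projective. Let `ν` be a nilpotent `R`-linear endomorphism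
of `R^n` with `ν^m = 0`. Then `R^n` is `R`-linearly isomorphic to the direct sum
`⊕_{i=0}^{m-1} ker(ν^{i+1})/ker(ν^i)` of the successive quotients of the kernel
filtration `0 ⊆ ker(ν) ⊆ ⋯ ⊆ ker(ν^m) = R^n` (where `ker(ν^0) = 0`). -/
theorem stmt4.{u} {R : Type u} [CommRing R]
    (hR : ∀ (M : Type u) [AddCommGroup M] [Module R M], Module.Finite R M →
      (∀ r ∈ nonZeroDivisors R, ∀ x : M, r • x = 0 → x = 0) → Module.Projective R M)
    (n : ℕ) (ν : (Fin n → R) →ₗ[R] (Fin n → R)) (m : ℕ) (hm : ν ^ m = 0) :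
    Nonempty ((Fin n → R) ≃ₗ[R]
      ⨁ i : Fin m,
        (LinearMap.ker (ν ^ ((i : ℕ) + 1)) ⧸
          (LinearMap.ker (ν ^ (i : ℕ))).comap (LinearMap.ker (ν ^ ((i : ℕ) + 1))).subtype)) := by
  -- torsion-freeness of R^n
  have htfRn : ∀ r ∈ nonZeroDivisors R, ∀ x : Fin n → R, r • x = 0 → x = 0 := by
    intro r hr x hx
    funext j
    have : r * x j = 0 := congrFun hx j
    exact (mem_nonZeroDivisors_iff_right.mp hr) _ (by rwa [mul_comm] at this)
  -- submodules of R^n are torsion-free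
  have htfSub : ∀ (S : Submodule R (Fin n → R)), ∀ r ∈ nonZeroDivisors R, ∀ x : S,
      r • x = 0 → x = 0 := by
    intro S r hr x hx
    ext1
    exact htfRn r hr x (congrArg Subtype.val hx)
  -- each ker (ν ^ j) is a finite module
  have hKfin : ∀ j : ℕ, Module.Finite R (LinearMap.ker (ν ^ j)) := by
    intro j
    have hfin : Module.Finite R (LinearMap.range (ν ^ j)) := Module.Finite.range _
    have hproj : Module.Projective R (LinearMap.range (ν ^ j)) :=
      hR _ hfin (htfSub _)
    obtain ⟨e⟩ := aux_split (R := R) ((ν ^ j).rangeRestrict) (ν ^ j).surjective_rangeRestrict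
    have hker : LinearMap.ker ((ν ^ j).rangeRestrict) = LinearMap.ker (ν ^ j) :=
      LinearMap.ker_rangeRestrict _
    have : Function.Surjective
        ((LinearMap.fst R (LinearMap.ker ((ν ^ j).rangeRestrict)) _).comp e.toLinearMap) := by
      exact (Prod.fst_surjective).comp e.surjective
    have := Module.Finite.of_surjective _ this
    rwa [hker] at this
  -- each successive quotient is projective
  have hQproj : ∀ j : ℕ, Module.Projective R
      (LinearMap.ker (ν ^ (j + 1)) ⧸
        (LinearMap.ker (ν ^ j)).comap (LinearMap.ker (ν ^ (j + 1))).subtype) := by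
    intro j
    haveI := hKfin (j + 1)
    refine hR _ (Module.Finite.of_surjective _ (Submodule.mkQ_surjective _)) ?_
    intro r hr x hx
    obtain ⟨y, rfl⟩ := Submodule.mkQ_surjective _ x
    rw [← map_smul, Submodule.mkQ_apply, Submodule.Quotient.mk_eq_zero] at hx
    have hx' : (ν ^ j) (r • (y : Fin n → R)) = 0 := hx
    rw [map_smul] at hx'
    have hy : (ν ^ j) (y : Fin n → R) = 0 := htfRn r hr _ hx'
    rw [Submodule.mkQ_apply, Submodule.Quotient.mk_eq_zero]
    exact hy
  -- kernels are monotone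
  have hmono : ∀ j : ℕ, LinearMap.ker (ν ^ j) ≤ LinearMap.ker (ν ^ (j + 1)) := by
    intro j x hx
    simp only [LinearMap.mem_ker] at hx ⊢
    rw [pow_succ']
    simp [Module.End.mul_apply, hx]
  -- the inductive claim
  have key : ∀ k : ℕ, Nonempty ((LinearMap.ker (ν ^ k)) ≃ₗ[R]
      Π i : Fin k, (LinearMap.ker (ν ^ ((i : ℕ) + 1)) ⧸
        (LinearMap.ker (ν ^ (i : ℕ))).comap (LinearMap.ker (ν ^ ((i : ℕ) + 1))).subtype)) := by
    intro k
    induction k with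
    | zero =>
        have hsub : Subsingleton (LinearMap.ker (ν ^ 0)) := by
          constructor
          rintro ⟨a, ha⟩ ⟨b, hb⟩
          simp only [pow_zero, LinearMap.mem_ker, Module.End.one_apply] at ha hb
          simp [ha, hb]
        exact ⟨LinearEquiv.ofSubsingleton _ _⟩
    | succ k ih =>
        obtain ⟨e⟩ := ih
        set p := (LinearMap.ker (ν ^ k)).comap (LinearMap.ker (ν ^ (k + 1))).subtype with hp
        haveI := hQproj k
        obtain ⟨e2⟩ := aux_split (R := R) p.mkQ (Submodule.mkQ_surjective p)
        have hkerq : LinearMap.ker p.mkQ = p := Submodule.ker_mkQ p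
        -- ker mkQ ≃ p ≃ ker (ν^k)
        have e3 : (LinearMap.ker p.mkQ) ≃ₗ[R] (LinearMap.ker (ν ^ k)) :=
          (LinearEquiv.ofEq _ _ hkerq).trans (Submodule.comapSubtypeEquivOfLe (hmono k))
        have e4 : (LinearMap.ker (ν ^ (k+1))) ≃ₗ[R]
            ((LinearMap.ker (ν ^ k)) ×
              (LinearMap.ker (ν ^ (k + 1)) ⧸ p)) :=
          e2.trans (LinearEquiv.prodCongr e3 (LinearEquiv.refl R _))
        -- now reassemble the Pi type
        have e5 := aux_snoc (R := R) k (fun j => (LinearMap.ker (ν ^ (j + 1)) ⧸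
          (LinearMap.ker (ν ^ j)).comap (LinearMap.ker (ν ^ (j + 1))).subtype))
        exact ⟨e4.trans ((LinearEquiv.prodCongr e (LinearEquiv.refl R _)).trans e5)⟩
  obtain ⟨e⟩ := key m
  have htop : LinearMap.ker (ν ^ m) = ⊤ := by rw [hm]; exact LinearMap.ker_zero
  have efin : (Fin n → R) ≃ₗ[R] (LinearMap.ker (ν ^ m)) :=
    Submodule.topEquiv.symm.trans (LinearEquiv.ofEq _ _ htop.symm)
  have efun : (Π i : Fin m, (LinearMap.ker (ν ^ ((i : ℕ) + 1)) ⧸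
        (LinearMap.ker (ν ^ (i : ℕ))).comap (LinearMap.ker (ν ^ ((i : ℕ) + 1))).subtype)) ≃ₗ[R]
      ⨁ i : Fin m, (LinearMap.ker (ν ^ ((i : ℕ) + 1)) ⧸
        (LinearMap.ker (ν ^ (i : ℕ))).comap (LinearMap.ker (ν ^ ((i : ℕ) + 1))).subtype) :=
    (DirectSum.linearEquivFunOnFintype R (Fin m) _).symm
  exact ⟨(efin.trans e).trans efun⟩
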